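/- Fix ω > 0. The threshold function q ↦ α(ω, q) = ω·(2(1−q))^((q−1)/(2−q))·(2−q)·q^(1/(q−2)) is strictly decreasing on (0, 1): for all 0 < q < q' < 1, α(ω, q') < α(ω, q). -/
import Mathlib


/-- The threshold `α(ω, q) = ω·(2(1−q))^((q−1)/(2−q))·(2−q)·q^(1/(q−2))` on `|b|`
below which the global minimizer of the `ℓ_q` scalar objective is zero.
Powers are real powers (`rpow`). -/
noncomputable def alphaThresh (ω q : ℝ) : ℝ :=
  ω * (2 * (1 - q)) ^ ((q - 1) / (2 - q)) * (2 - q) * q ^ (1 / (q - 2))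

/-- The logarithm of `alphaThresh ω q / ω`. -/
noncomputable def gfun (q : ℝ) : ℝ :=
  (q - 1) / (2 - q) * Real.log (2 * (1 - q)) + Real.log (2 - q) - Real.log q / (2 - q)

lemma alphaThresh_eq (ω : ℝ) {q : ℝ} (hq0 : 0 < q) (hq1 : q < 1) :
    alphaThresh ω q = ω * Real.exp (gfun q) := by
  have h1q : (0:ℝ) < 1 - q := by linarith
  have h2q : (0:ℝ) < 2 - q := by linarith
  have hb : (0:ℝ) < 2 * (1 - q) := by linarith
  have hne : (2 - q : ℝ) ≠ 0 := h2q.ne'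
  have hne' : (q - 2 : ℝ) ≠ 0 := by intro h; apply hne; linarith
  rw [alphaThresh, gfun, Real.rpow_def_of_pos hb, Real.rpow_def_of_pos hq0,
    show (q - 1) / (2 - q) * Real.log (2 * (1 - q)) + Real.log (2 - q) -
        Real.log q / (2 - q) =
      (Real.log (2 * (1 - q)) * ((q - 1) / (2 - q)) + Real.log q * (1 / (q - 2))) +
        Real.log (2 - q) from by field_simp; ring,
    Real.exp_add, Real.exp_add, Real.exp_log h2q]
  ring

lemma hasDerivAt_gfun {q : ℝ} (hq0 : 0 < q) (hq1 : q < 1) :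
    HasDerivAt gfun
      ((Real.log (2 * (1 - q)) - Real.log q) / (2 - q) ^ 2 - 1 / (q * (2 - q))) q := by
  have h1q : (0:ℝ) < 1 - q := by linarith
  have h2q : (0:ℝ) < 2 - q := by linarith
  have hb : (0:ℝ) < 2 * (1 - q) := by linarith
  have hA : HasDerivAt (fun x : ℝ => (x - 1) / (2 - x))
      ((1 * (2 - q) - (q - 1) * (-1)) / (2 - q) ^ 2) q :=
    ((hasDerivAt_id q).sub_const 1).div ((hasDerivAt_id q).const_sub 2) h2q.ne'
  have hB : HasDerivAt (fun x : ℝ => Real.log (2 * (1 - x)))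
      ((2 * (-1)) / (2 * (1 - q))) q :=
    (((hasDerivAt_id q).const_sub 1).const_mul 2).log hb.ne'
  have hC : HasDerivAt (fun x : ℝ => Real.log (2 - x)) ((-1) / (2 - q)) q :=
    ((hasDerivAt_id q).const_sub 2).log h2q.ne'
  have hD : HasDerivAt (fun x : ℝ => Real.log x / (2 - x))
      ((q⁻¹ * (2 - q) - Real.log q * (-1)) / (2 - q) ^ 2) q :=
    (Real.hasDerivAt_log hq0.ne').div ((hasDerivAt_id q).const_sub 2) h2q.ne'
  have H := ((hA.mul hB).add hC).sub hD
  have heq :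
      ((1 * (2 - q) - (q - 1) * (-1)) / (2 - q) ^ 2 * Real.log (2 * (1 - q)) +
          (q - 1) / (2 - q) * ((2 * (-1)) / (2 * (1 - q))) + (-1) / (2 - q)) -
        (q⁻¹ * (2 - q) - Real.log q * (-1)) / (2 - q) ^ 2 =
      (Real.log (2 * (1 - q)) - Real.log q) / (2 - q) ^ 2 - 1 / (q * (2 - q)) := by
    field_simp
    ring
  rw [← heq]
  exact H

lemma deriv_gfun_neg {q : ℝ} (hq0 : 0 < q) (hq1 : q < 1) :
    (Real.log (2 * (1 - q)) - Real.log q) / (2 - q) ^ 2 - 1 / (q * (2 - q)) < 0 := by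
  have h1q : (0:ℝ) < 1 - q := by linarith
  have h2q : (0:ℝ) < 2 - q := by linarith
  have hb : (0:ℝ) < 2 * (1 - q) := by linarith
  have ht : (0:ℝ) < 2 * (1 - q) / q := div_pos hb hq0
  have hlog : Real.log (2 * (1 - q)) - Real.log q = Real.log (2 * (1 - q) / q) :=
    (Real.log_div hb.ne' hq0.ne').symm
  have hle : Real.log (2 * (1 - q) / q) ≤ 2 * (1 - q) / q - 1 :=
    Real.log_le_sub_one_of_pos ht
  have hkey : (2 * (1 - q) / q - 1) / (2 - q) ^ 2 - 1 / (q * (2 - q)) =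
      -2 / (2 - q) ^ 2 := by
    field_simp
    ring
  have hsq : (0:ℝ) < (2 - q) ^ 2 := by positivity
  calc (Real.log (2 * (1 - q)) - Real.log q) / (2 - q) ^ 2 - 1 / (q * (2 - q))
      ≤ (2 * (1 - q) / q - 1) / (2 - q) ^ 2 - 1 / (q * (2 - q)) := by
        rw [hlog]; gcongr
    _ = -2 / (2 - q) ^ 2 := hkey
    _ < 0 := div_neg_of_neg_of_pos (by norm_num) hsq

lemma gfun_strictAntiOn : StrictAntiOn gfun (Set.Ioo (0:ℝ) 1) := by
  apply StrictAntiOn.mono ?_ (le_refl _)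
  have : StrictAntiOn gfun (Set.Ioo (0:ℝ) 1) := by
    apply strictAntiOn_of_deriv_neg (convex_Ioo 0 1)
    · intro x hx
      exact (hasDerivAt_gfun hx.1 hx.2).continuousAt.continuousWithinAt
    · intro x hx
      rw [interior_Ioo] at hx
      rw [(hasDerivAt_gfun hx.1 hx.2).deriv]
      exact deriv_gfun_neg hx.1 hx.2
  exact this

/-- For fixed `ω > 0`, the threshold `q ↦ α(ω, q)` is strictly decreasing on
`(0, 1)`: for all `0 < q < q' < 1`, `α(ω, q') < α(ω, q)`. -/
theorem alpha_strict_anti (ω : ℝ) (hω : 0 < ω) (q q' : ℝ)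
    (hq0 : 0 < q) (hqq' : q < q') (hq'1 : q' < 1) :
    alphaThresh ω q' < alphaThresh ω q := by
  have hq1 : q < 1 := lt_trans hqq' hq'1
  have hq'0 : 0 < q' := lt_trans hq0 hqq'
  have hg : gfun q' < gfun q :=
    gfun_strictAntiOn ⟨hq0, hq1⟩ ⟨hq'0, hq'1⟩ hqq'
  rw [alphaThresh_eq ω hq0 hq1, alphaThresh_eq ω hq'0 hq'1]
  exact mul_lt_mul_of_pos_left (Real.exp_lt_exp.2 hg) hω
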